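/- arXiv:quant-ph/0511096 — 6 statements merged into one kernel-verified Lean document; each statement's English description precedes it below -/
import Mathlib

section
/- If A is a complex number and d = -A^2 - A^{-2}, then the map ρ_A sending the braid generator σ_i to A·E_i + A^{-1}·1 in the Temperley-Lieb algebra TL_n(d) respects the braid relation: ρ_A(σ_i)ρ_A(σ_{i+1})ρ_A(σ_i) = ρ_A(σ_{i+1})ρ_A(σ_i)ρ_A(σ_{i+1}). -/
/-!
Write `ρ x = A • x + A⁻¹ • 1`. Expanding `ρ x * ρ y * ρ x` with `x y x = x` and `x² = d x`, the
coefficient of `x` is `A³ + A d + 2 A⁻¹`, which collapses to `A⁻¹` exactly when `d = -A² - A⁻²`.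
The product is then `A⁻¹ (x + y) + A (x y + y x) + A⁻³`, which is symmetric in `x` and `y`.
-/

theorem smul_add_inv_smul_one_triple_product {K R : Type*} [Field K] [Ring R] [Algebra K R]
    {A d : K} (hA : A ≠ 0) (hd : d = -A ^ 2 - (A ^ 2)⁻¹) {x y : R}
    (hxx : x * x = d • x) (hxyx : x * y * x = x) :
    (A • x + A⁻¹ • 1) * (A • y + A⁻¹ • 1) * (A • x + A⁻¹ • 1) =
      A⁻¹ • (x + y) + A • (x * y + y * x) + A⁻¹ ^ 3 • 1 := by
  simp only [mul_add, add_mul, smul_mul_assoc, mul_smul_comm, smul_smul, one_mul, mul_one,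
    hxx, hxyx, hd]
  match_scalars <;> field_simp
  ring

theorem braid_relation_of_TL_general
    {R : Type*} [Ring R] [Algebra ℂ R] (n : ℕ) (A d : ℂ) (hA : A ≠ 0)
    (hd : d = -A ^ 2 - (A ^ 2)⁻¹)
    (E : ℕ → R)
    (hEiE : ∀ i, 1 ≤ i → i + 1 ≤ n - 1 → E i * E (i + 1) * E i = E i)
    (hEiE' : ∀ i, 1 ≤ i → i + 1 ≤ n - 1 → E (i + 1) * E i * E (i + 1) = E (i + 1))
    (hsq : ∀ i, 1 ≤ i → i ≤ n - 1 → E i * E i = d • E i)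
    (i : ℕ) (hi : 1 ≤ i) (hi' : i + 1 ≤ n - 1) :
    (A • E i + A⁻¹ • 1) * (A • E (i + 1) + A⁻¹ • 1) * (A • E i + A⁻¹ • 1) =
      (A • E (i + 1) + A⁻¹ • 1) * (A • E i + A⁻¹ • 1) * (A • E (i + 1) + A⁻¹ • 1) := by
  have hsq_i := hsq i hi (by omega)
  have hsq_succ := hsq (i + 1) (by omega) hi'
  rw [smul_add_inv_smul_one_triple_product hA hd hsq_i (hEiE i hi hi'),
    smul_add_inv_smul_one_triple_product hA hd hsq_succ (hEiE' i hi hi'),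
    add_comm (E (i + 1)), add_comm (E (i + 1) * E i)]

/-- In the Temperley-Lieb algebra `TL_n(d)` (formalized as any complex
algebra containing elements `E 1, ..., E (n-1)` satisfying the Temperley-Lieb
relations), if `d = -A^2 - A^{-2}`, then `ρ_A(σ_i) = A•E_i + A⁻¹•1` satisfies the
braid relation `ρ_A(σ_i) ρ_A(σ_{i+1}) ρ_A(σ_i) = ρ_A(σ_{i+1}) ρ_A(σ_i) ρ_A(σ_{i+1})`. -/
theorem braid_relation_of_TL
    {R : Type*} [Ring R] [Algebra ℂ R] (n : ℕ) (A d : ℂ) (hA : A ≠ 0)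
    (hd : d = -A ^ 2 - (A ^ 2)⁻¹)
    (E : ℕ → R)
    (hcomm : ∀ i j, 1 ≤ i → i ≤ n - 1 → 1 ≤ j → j ≤ n - 1 →
      (i + 2 ≤ j ∨ j + 2 ≤ i) → E i * E j = E j * E i)
    (hEiE : ∀ i, 1 ≤ i → i + 1 ≤ n - 1 → E i * E (i + 1) * E i = E i)
    (hEiE' : ∀ i, 1 ≤ i → i + 1 ≤ n - 1 → E (i + 1) * E i * E (i + 1) = E (i + 1))
    (hsq : ∀ i, 1 ≤ i → i ≤ n - 1 → E i * E i = d • E i)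
    (i : ℕ) (hi : 1 ≤ i) (hi' : i + 1 ≤ n - 1) :
    (A • E i + A⁻¹ • 1) * (A • E (i + 1) + A⁻¹ • 1) * (A • E i + A⁻¹ • 1) =
      (A • E (i + 1) + A⁻¹ • 1) * (A • E i + A⁻¹ • 1) * (A • E (i + 1) + A⁻¹ • 1) :=
  braid_relation_of_TL_general n A d hA hd E hEiE hEiE' hsq i hi hi'
end

section
/- In the Temperley-Lieb algebra TL_n(d), every reduced word in the generators E_1,...,E_{n-1} contains at most one occurrence of E_{n-1}. Equivalently: any word in the E_i containing two occurrences of E_{n-1} is equal in TL_n(d) to a scalar multiple of a word containing strictly fewer occurrences of E_{n-1}. -/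
/-!
Induction on the top index `k`. Between two consecutive occurrences of `E_{k+1}` stands a word
in `E_1, …, E_k`; by the inductive hypothesis it is a multiple of a word with at most one `E_k`.
If there is none, `E_{k+1}` commutes past the whole word and `E_{k+1}² = d E_{k+1}`; if there is
one, `E_{k+1}` commutes past everything except that `E_k`, and `E_{k+1} E_k E_{k+1} = E_{k+1}`.
Either way the two occurrences of `E_{k+1}` merge into one.
-/

namespace TemperleyLieb

theorem commute_prod_of_forall_lt {M : Type*} [Monoid M] {E : ℕ → M} {m : ℕ}
    (hcomm : ∀ a, 1 ≤ a → a < m → Commute (E (m + 1)) (E a))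
    (u : List ℕ) (hu : ∀ a ∈ u, 1 ≤ a ∧ a < m) : Commute (E (m + 1)) (u.map E).prod :=
  Commute.list_prod_right _ _ fun _ hx ↦ by
    obtain ⟨a, ha, rfl⟩ := List.mem_map.1 hx
    exact hcomm a (hu a ha).1 (hu a ha).2

variable {R : Type*} [Ring R] [Algebra ℂ R]

def TopGeneratorReducible (E : ℕ → R) (k : ℕ) : Prop :=
  ∀ w : List ℕ, (∀ a ∈ w, 1 ≤ a ∧ a ≤ k) → 2 ≤ w.count k →
    ∃ (c : ℂ) (w' : List ℕ), (∀ a ∈ w', 1 ≤ a ∧ a ≤ k) ∧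
      w'.count k < w.count k ∧ (w.map E).prod = c • (w'.map E).prod

theorem topGeneratorReducible_zero (E : ℕ → R) : TopGeneratorReducible E 0 := by
  intro w hw hcount
  obtain ⟨a, ha⟩ := List.exists_mem_of_ne_nil w (by rintro rfl; simp at hcount)
  have := hw a ha
  omega

theorem TopGeneratorReducible.exists_count_le_one {E : ℕ → R} {k : ℕ}
    (hred : TopGeneratorReducible E k) (w : List ℕ) (hw : ∀ a ∈ w, 1 ≤ a ∧ a ≤ k) :
    ∃ (c : ℂ) (w' : List ℕ), (∀ a ∈ w', 1 ≤ a ∧ a ≤ k) ∧ w'.count k ≤ 1 ∧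
      (w.map E).prod = c • (w'.map E).prod := by
  induction hN : w.count k using Nat.strong_induction_on generalizing w with
  | _ N ih =>
  by_cases h2 : 2 ≤ N
  · obtain ⟨c, w₁, hw₁, hlt, heq⟩ := hred w hw (hN ▸ h2)
    obtain ⟨c', w', hw', hle, heq'⟩ := ih _ (hN ▸ hlt) w₁ hw₁ rfl
    exact ⟨c * c', w', hw', hle, by rw [heq, heq', smul_smul]⟩
  · exact ⟨1, w, hw, by omega, (one_smul _ _).symm⟩

theorem TopGeneratorReducible.exists_mul_prod_mul_eq_smul {E : ℕ → R} {d : ℂ} {k : ℕ}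
    (hred : TopGeneratorReducible E k)
    (hcomm : ∀ a, 1 ≤ a → a < k → Commute (E (k + 1)) (E a))
    (hbraid : 1 ≤ k → E (k + 1) * E k * E (k + 1) = E (k + 1))
    (hsq : E (k + 1) * E (k + 1) = d • E (k + 1))
    (y : List ℕ) (hy : ∀ a ∈ y, 1 ≤ a ∧ a ≤ k) :
    ∃ (c : ℂ) (y' : List ℕ), (∀ a ∈ y', 1 ≤ a ∧ a ≤ k + 1) ∧ y'.count (k + 1) ≤ 1 ∧
      E (k + 1) * (y.map E).prod * E (k + 1) = c • (y'.map E).prod := by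
  obtain ⟨c, y₁, hy₁, hcount, heq⟩ := hred.exists_count_le_one y hy
  have hlt : ∀ u : List ℕ, u ⊆ y₁ → k ∉ u → ∀ a ∈ u, 1 ≤ a ∧ a < k := fun u hsub hk a ha ↦
    have := hy₁ a (hsub ha)
    ⟨this.1, lt_of_le_of_ne this.2 (by rintro rfl; exact hk ha)⟩
  have hfree : ∀ u : List ℕ, u ⊆ y₁ → u.count (k + 1) = 0 := fun u hsub ↦
    List.count_eq_zero.2 fun h ↦ by have := hy₁ _ (hsub h); omega
  by_cases hk : k ∈ y₁
  · obtain ⟨u, v, rfl, hku⟩ := List.eq_append_cons_of_mem hk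
    have hkv : k ∉ v := fun h ↦ by
      have := List.count_pos_iff.2 h
      simp only [List.count_append, List.count_cons_self] at hcount
      omega
    have hU := commute_prod_of_forall_lt hcomm u (hlt u (by simp) hku)
    have hV := commute_prod_of_forall_lt hcomm v (hlt v (by simp) hkv)
    have hmerge : E (k + 1) * ((u ++ k :: v).map E).prod * E (k + 1) =
        ((u ++ (k + 1) :: v).map E).prod := by
      simp only [List.map_append, List.map_cons, List.prod_append, List.prod_cons]
      calc E (k + 1) * ((u.map E).prod * (E k * (v.map E).prod)) * E (k + 1)
          = (u.map E).prod * (E (k + 1) * E k * E (k + 1)) * (v.map E).prod := by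
            rw [← mul_assoc, hU.eq]; simp only [mul_assoc, hV.eq]
        _ = (u.map E).prod * (E (k + 1) * (v.map E).prod) := by
            rw [hbraid (hy₁ k hk).1, mul_assoc]
    refine ⟨c, u ++ (k + 1) :: v, fun a ha ↦ ?_, ?_, ?_⟩
    · simp only [List.mem_append, List.mem_cons] at ha
      rcases ha with ha | rfl | ha
      · have := hy₁ a (by simp [ha]); omega
      · omega
      · have := hy₁ a (by simp [ha]); omega
    · simp [List.count_append, hfree u (by simp), hfree v (by simp)]
    · rw [heq, mul_smul_comm, smul_mul_assoc, hmerge]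
  · have hY := commute_prod_of_forall_lt hcomm y₁ (hlt y₁ (List.Subset.refl _) hk)
    refine ⟨c * d, y₁ ++ [k + 1], fun a ha ↦ ?_, ?_, ?_⟩
    · simp only [List.mem_append, List.mem_singleton] at ha
      rcases ha with ha | rfl
      · have := hy₁ a ha; omega
      · omega
    · simp [List.count_append, hfree y₁ (List.Subset.refl _)]
    · rw [heq, mul_smul_comm, smul_mul_assoc, hY.eq, mul_assoc, hsq]
      simp [List.prod_append, smul_smul]

theorem TopGeneratorReducible.succ {E : ℕ → R} {d : ℂ} {k : ℕ}
    (hred : TopGeneratorReducible E k)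
    (hcomm : ∀ a, 1 ≤ a → a < k → Commute (E (k + 1)) (E a))
    (hbraid : 1 ≤ k → E (k + 1) * E k * E (k + 1) = E (k + 1))
    (hsq : E (k + 1) * E (k + 1) = d • E (k + 1)) :
    TopGeneratorReducible E (k + 1) := by
  intro w hw hcount
  obtain ⟨x, rest, rfl, hx⟩ :=
    List.eq_append_cons_of_mem (List.count_pos_iff.1 (by omega : 0 < w.count (k + 1)))
  have hrest : k + 1 ∈ rest := by
    simpa [List.count_append, List.count_eq_zero.2 hx] using hcount
  obtain ⟨y, z, rfl, hy⟩ := List.eq_append_cons_of_mem hrest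
  have hyk : ∀ a ∈ y, 1 ≤ a ∧ a ≤ k := fun a ha ↦ by
    have := hw a (by simp [ha])
    have : a ≠ k + 1 := by rintro rfl; exact hy ha
    omega
  obtain ⟨c, y', hy', hcount', heq⟩ :=
    hred.exists_mul_prod_mul_eq_smul hcomm hbraid hsq y hyk
  refine ⟨c, x ++ y' ++ z, fun a ha ↦ ?_, ?_, ?_⟩
  · simp only [List.mem_append] at ha
    rcases ha with (ha | ha) | ha
    · exact hw a (by simp [ha])
    · exact hy' a ha
    · exact hw a (by simp [ha])
  · simp only [List.append_assoc, List.count_append, List.count_cons_self,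
      List.count_eq_zero.2 hx, List.count_eq_zero.2 hy] at hcount ⊢
    omega
  · simp only [List.map_append, List.map_cons, List.prod_append, List.prod_cons]
    rw [← mul_assoc (E (k + 1)), ← mul_assoc (E (k + 1) * _), heq]
    simp [mul_assoc]

end TemperleyLieb

theorem word_reduces_second_top_generator_general
    {R : Type*} [Ring R] [Algebra ℂ R] (n : ℕ) (d : ℂ)
    (E : ℕ → R)
    (hcomm : ∀ i j, 1 ≤ i → i ≤ n - 1 → 1 ≤ j → j ≤ n - 1 →
      (i + 2 ≤ j ∨ j + 2 ≤ i) → E i * E j = E j * E i)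
    (hEiE' : ∀ i, 1 ≤ i → i + 1 ≤ n - 1 → E (i + 1) * E i * E (i + 1) = E (i + 1))
    (hsq : ∀ i, 1 ≤ i → i ≤ n - 1 → E i * E i = d • E i)
    (w : List ℕ) (hw : ∀ a ∈ w, 1 ≤ a ∧ a ≤ n - 1)
    (hcount : 2 ≤ w.count (n - 1)) :
    ∃ (c : ℂ) (w' : List ℕ), (∀ a ∈ w', 1 ≤ a ∧ a ≤ n - 1) ∧
      w'.count (n - 1) < w.count (n - 1) ∧
      (w.map E).prod = c • (w'.map E).prod := by
  have hred : ∀ k ≤ n - 1, TemperleyLieb.TopGeneratorReducible E k := by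
    intro k hk
    induction k with
    | zero => exact TemperleyLieb.topGeneratorReducible_zero E
    | succ k ih =>
      exact (ih (by omega)).succ
        (fun a ha hak ↦ hcomm (k + 1) a (by omega) hk ha (by omega) (Or.inr (by omega)))
        (fun hk1 ↦ hEiE' k hk1 hk) (hsq (k + 1) (by omega) hk)
  exact hred (n - 1) le_rfl w hw hcount

/-- In the Temperley-Lieb algebra `TL_n(d)` (formalized via its
generators and relations), any word in the generators `E_1,...,E_{n-1}` containing at
least two occurrences of `E_{n-1}` is equal to a scalar multiple of a word containing
strictly fewer occurrences of `E_{n-1}` (hence every reduced word contains at most one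
occurrence of `E_{n-1}`). -/
theorem word_reduces_second_top_generator
    {R : Type*} [Ring R] [Algebra ℂ R] (n : ℕ) (d : ℂ)
    (E : ℕ → R)
    (hcomm : ∀ i j, 1 ≤ i → i ≤ n - 1 → 1 ≤ j → j ≤ n - 1 →
      (i + 2 ≤ j ∨ j + 2 ≤ i) → E i * E j = E j * E i)
    (hEiE : ∀ i, 1 ≤ i → i + 1 ≤ n - 1 → E i * E (i + 1) * E i = E i)
    (hEiE' : ∀ i, 1 ≤ i → i + 1 ≤ n - 1 → E (i + 1) * E i * E (i + 1) = E (i + 1))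
    (hsq : ∀ i, 1 ≤ i → i ≤ n - 1 → E i * E i = d • E i)
    (w : List ℕ) (hw : ∀ a ∈ w, 1 ≤ a ∧ a ≤ n - 1)
    (hcount : 2 ≤ w.count (n - 1)) :
    ∃ (c : ℂ) (w' : List ℕ), (∀ a ∈ w', 1 ≤ a ∧ a ≤ n - 1) ∧
      w'.count (n - 1) < w.count (n - 1) ∧
      (w.map E).prod = c • (w'.map E).prod :=
  word_reduces_second_top_generator_general n d E hcomm hEiE' hsq w hw hcount
end

section
/- Any two linear functionals tr, tr' : TL_n(d) → ℂ satisfying (1) tr(1) = 1, (2) tr(XY) = tr(YX) for all X, Y, and (3) tr(X·E_{n-1}) = (1/d)·tr(X) for all X in the subalgebra TL_{n-1}(d) (and similarly at each level of the natural inclusion chain TL_1 ⊂ TL_2 ⊂ ... ⊂ TL_n), are equal. -/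
/-!
Write `T_k` for the subalgebra generated by `E_1, …, E_k`. Since `E_{k+1}` commutes with
`T_{k-1}`, `E_{k+1}² = d E_{k+1}` and `E_{k+1} E_k E_{k+1} = E_{k+1}`, one gets
`E_{k+1} T_k E_{k+1} ⊆ T_k E_{k+1} T_k`, and hence `T_{k+1} = T_k + T_k E_{k+1} T_k`.
Traciality and the Markov property give `tr (a E_{k+1} b) = d⁻¹ tr (b a)` for `a, b ∈ T_k`,
so a Markov trace on `T_{k+1}` is determined by its restriction to `T_k`, and on `T_0 = ℂ`
it is determined by `tr 1 = 1`.
-/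

open Submodule

section Sandwich

variable {K R : Type*} [CommRing K] [Ring R] [Algebra K R]

theorem sup_sandwich_mul_self_le {P E : Submodule K R} (hP : P * P ≤ P)
    (hE : E * P * E ≤ P * E * P) :
    (P ⊔ P * E * P) * (P ⊔ P * E * P) ≤ P ⊔ P * E * P := by
  have hPQ : P * (P * E * P) ≤ P * E * P :=
    calc P * (P * E * P) = P * P * E * P := by simp only [mul_assoc]
      _ ≤ P * E * P := by gcongr
  have hQP : P * E * P * P ≤ P * E * P :=
    calc P * E * P * P = P * E * (P * P) := mul_assoc _ _ _
      _ ≤ P * E * P := by gcongr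
  have hQQ : P * E * P * (P * E * P) ≤ P * E * P :=
    calc P * E * P * (P * E * P) = P * E * (P * P) * E * P := by simp only [mul_assoc]
      _ ≤ P * E * P * E * P := by gcongr
      _ = P * (E * P * E) * P := by simp only [mul_assoc]
      _ ≤ P * (P * E * P) * P := by gcongr
      _ = (P * P) * E * (P * P) := by simp only [mul_assoc]
      _ ≤ P * E * P := by gcongr
  rw [Submodule.mul_sup, Submodule.sup_mul, Submodule.sup_mul]
  exact sup_le (sup_le (hP.trans le_sup_left) (hQP.trans le_sup_right))
    (sup_le (hPQ.trans le_sup_right) (hQQ.trans le_sup_right))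

theorem toSubmodule_adjoin_insert_le (S : Subalgebra K R) (e : R)
    (he : (K ∙ e) * S.toSubmodule * (K ∙ e) ≤ S.toSubmodule * (K ∙ e) * S.toSubmodule) :
    (Algebra.adjoin K (insert e (S : Set R))).toSubmodule ≤
      S.toSubmodule ⊔ S.toSubmodule * (K ∙ e) * S.toSubmodule := by
  set M := S.toSubmodule ⊔ S.toSubmodule * (K ∙ e) * S.toSubmodule
  have hM : M * M ≤ M := sup_sandwich_mul_self_le S.isIdempotentElem_toSubmodule.le he
  have h1 : (1 : R) ∈ S.toSubmodule := S.one_mem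
  let A : Subalgebra K R := M.toSubalgebra (mem_sup_left h1) fun x y hx hy => hM (mul_mem_mul hx hy)
  suffices Algebra.adjoin K (insert e (S : Set R)) ≤ A from this
  refine Algebra.adjoin_le (Set.insert_subset ?_ fun x hx => mem_sup_left hx)
  refine mem_sup_right ?_
  simpa using mul_mem_mul (mul_mem_mul h1 (mem_span_singleton_self e)) h1

theorem span_singleton_mul_span_singleton (a b : R) : (K ∙ a) * (K ∙ b) = K ∙ (a * b) := by
  rw [span_mul_span, Set.singleton_mul_singleton]

theorem span_singleton_mul_self_le {e : R} {d : K} (he : e * e = d • e) :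
    (K ∙ e) * (K ∙ e) ≤ K ∙ e := by
  rw [span_singleton_mul_span_singleton, he]
  exact span_singleton_smul_le K d e

theorem span_singleton_mul_comm_of_le_centralizer {S : Subalgebra K R} {e : R}
    (h : S ≤ Subalgebra.centralizer K {e}) :
    (K ∙ e) * S.toSubmodule = S.toSubmodule * (K ∙ e) := by
  refine mul_comm_of_commute fun x hx y hy => ?_
  obtain ⟨c, rfl⟩ := mem_span_singleton.mp hx
  have hey : Commute e y := (Subalgebra.mem_centralizer_iff K).mp (h hy) e rfl
  exact hey.smul_left c

theorem mul_mul_le_sandwich {P' P E : Submodule K R} (hcomm : E * P' = P' * E) (hE : E * E ≤ E)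
    (hP' : P' ≤ P) (hP : 1 ≤ P) : E * P' * E ≤ P * E * P :=
  calc E * P' * E = P' * (E * E) := by rw [hcomm, mul_assoc]
    _ ≤ P' * E * 1 := by rw [mul_one]; gcongr
    _ ≤ P * E * P := by gcongr

theorem mul_sup_sandwich_mul_le_sandwich {P' P E F : Submodule K R} (hcomm : E * P' = P' * E)
    (hE : E * E ≤ E) (hF : E * F * E ≤ E) (hP' : P' ≤ P) (hP : 1 ≤ P) :
    E * (P' ⊔ P' * F * P') * E ≤ P * E * P := by
  have hsandwich : E * (P' * F * P') * E ≤ P * E * P :=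
    calc E * (P' * F * P') * E = E * P' * F * (P' * E) := by simp only [mul_assoc]
      _ = P' * E * F * (E * P') := by rw [hcomm]
      _ = P' * (E * F * E) * P' := by simp only [mul_assoc]
      _ ≤ P' * E * P' := by gcongr
      _ ≤ P * E * P := by gcongr
  rw [Submodule.mul_sup, Submodule.sup_mul]
  exact sup_le (mul_mul_le_sandwich hcomm hE hP' hP) hsandwich

theorem trace_sandwich_eq {S : Subalgebra K R} {e : R} {c : K} {tr : R →ₗ[K] K}
    (htr : ∀ x y, tr (x * y) = tr (y * x)) (hmarkov : ∀ x ∈ S, tr (x * e) = c * tr x)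
    {a b : R} (ha : a ∈ S) (hb : b ∈ S) : tr (a * e * b) = c * tr (b * a) := by
  rw [htr, ← mul_assoc, hmarkov _ (mul_mem hb ha)]

theorem toSubmodule_sup_sandwich_le_eqLocus {S : Subalgebra K R} {e : R} {c : K}
    {tr tr' : R →ₗ[K] K} (htr : ∀ x y, tr (x * y) = tr (y * x))
    (htr' : ∀ x y, tr' (x * y) = tr' (y * x)) (hS : S.toSubmodule ≤ LinearMap.eqLocus tr tr')
    (hmarkov : ∀ x ∈ S, tr (x * e) = c * tr x)
    (hmarkov' : ∀ x ∈ S, tr' (x * e) = c * tr' x) :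
    S.toSubmodule ⊔ S.toSubmodule * (K ∙ e) * S.toSubmodule ≤ LinearMap.eqLocus tr tr' := by
  refine sup_le hS (mul_le.mpr fun y hy b (hb : b ∈ S) => ?_)
  suffices S.toSubmodule * (K ∙ e) ≤
      (LinearMap.eqLocus tr tr').comap (LinearMap.mulRight K b) from this hy
  refine mul_le.mpr fun a (ha : a ∈ S) x hx => ?_
  obtain ⟨t, rfl⟩ := mem_span_singleton.mp hx
  have hab : tr (b * a) = tr' (b * a) := hS (S.mul_mem hb ha)
  simp only [mem_comap, LinearMap.mulRight_apply, LinearMap.mem_eqLocus, mul_smul_comm,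
    map_smul, trace_sandwich_eq htr hmarkov ha hb,
    trace_sandwich_eq htr' hmarkov' ha hb, hab]

end Sandwich

section TemperleyLieb

variable (K : Type*) {R : Type*} [CommRing K] [Ring R] [Algebra K R]

/-- `tlSubalgebra K E k` is the paper's `TL_{k+1}`. -/
def tlSubalgebra (E : ℕ → R) (k : ℕ) : Subalgebra K R :=
  Algebra.adjoin K (E '' {i | 1 ≤ i ∧ i ≤ k})

variable {K} {E : ℕ → R}

theorem tlSubalgebra_zero : tlSubalgebra K E 0 = ⊥ := by
  have h : {i : ℕ | 1 ≤ i ∧ i ≤ 0} = ∅ := by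
    ext i
    simp only [Set.mem_ofPred_eq, Set.mem_empty_iff_false, iff_false]
    omega
  rw [tlSubalgebra, h, Set.image_empty, Algebra.adjoin_empty]

theorem tlSubalgebra_succ (k : ℕ) :
    tlSubalgebra K E (k + 1) =
      Algebra.adjoin K (insert (E (k + 1)) (tlSubalgebra K E k : Set R)) := by
  have h : {i : ℕ | 1 ≤ i ∧ i ≤ k + 1} = insert (k + 1) {i | 1 ≤ i ∧ i ≤ k} := by
    ext i
    simp only [Set.mem_ofPred_eq, Set.mem_insert_iff]
    omega
  rw [tlSubalgebra, tlSubalgebra, Algebra.adjoin_insert_adjoin, h, Set.image_insert_eq]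

theorem tlSubalgebra_mono : Monotone (tlSubalgebra K E) := fun _ _ hjk =>
  Algebra.adjoin_mono (Set.image_mono fun _ hi => ⟨hi.1, hi.2.trans hjk⟩)

theorem tlSubalgebra_le_centralizer {n j k : ℕ}
    (hcomm : ∀ i j, 1 ≤ i → i ≤ n - 1 → 1 ≤ j → j ≤ n - 1 →
      (i + 2 ≤ j ∨ j + 2 ≤ i) → E i * E j = E j * E i)
    (hjk : j + 2 ≤ k) (hk : k ≤ n - 1) :
    tlSubalgebra K E j ≤ Subalgebra.centralizer K {E k} := by
  refine Algebra.adjoin_le ?_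
  rintro _ ⟨i, ⟨hi, hij⟩, rfl⟩
  rw [SetLike.mem_coe, Subalgebra.mem_centralizer_iff]
  rintro _ rfl
  exact (hcomm i k hi (by omega) (by omega) hk (Or.inl (by omega))).symm

theorem toSubmodule_tlSubalgebra_succ_le {n : ℕ} {d : K}
    (hcomm : ∀ i j, 1 ≤ i → i ≤ n - 1 → 1 ≤ j → j ≤ n - 1 →
      (i + 2 ≤ j ∨ j + 2 ≤ i) → E i * E j = E j * E i)
    (hEiE' : ∀ i, 1 ≤ i → i + 1 ≤ n - 1 → E (i + 1) * E i * E (i + 1) = E (i + 1))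
    (hsq : ∀ i, 1 ≤ i → i ≤ n - 1 → E i * E i = d • E i)
    {k : ℕ} (hk : k + 1 ≤ n - 1) :
    (tlSubalgebra K E (k + 1)).toSubmodule ≤ (tlSubalgebra K E k).toSubmodule ⊔
      (tlSubalgebra K E k).toSubmodule * (K ∙ E (k + 1)) * (tlSubalgebra K E k).toSubmodule := by
  have hone : ∀ j, 1 ≤ (tlSubalgebra K E j).toSubmodule := fun j =>
    Submodule.one_le.mpr (Subalgebra.one_mem _)
  have hsq' : ∀ i, 1 ≤ i → i ≤ n - 1 → (K ∙ E i) * (K ∙ E i) ≤ K ∙ E i :=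
    fun i hi hin => span_singleton_mul_self_le (hsq i hi hin)
  induction k with
  | zero =>
    rw [tlSubalgebra_succ]
    have hcomm' := span_singleton_mul_comm_of_le_centralizer (S := tlSubalgebra K E 0) (e := E 1)
      (by rw [tlSubalgebra_zero]; exact bot_le)
    exact toSubmodule_adjoin_insert_le _ _
      (mul_mul_le_sandwich hcomm' (hsq' 1 le_rfl hk) le_rfl (hone 0))
  | succ j ih =>
    have hEF : (K ∙ E (j + 2)) * (K ∙ E (j + 1)) * (K ∙ E (j + 2)) ≤ K ∙ E (j + 2) := by
      rw [span_singleton_mul_span_singleton, span_singleton_mul_span_singleton,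
        hEiE' _ (by omega) hk]
    have hcomm' := span_singleton_mul_comm_of_le_centralizer
      (tlSubalgebra_le_centralizer (K := K) hcomm le_rfl hk)
    rw [tlSubalgebra_succ (j + 1)]
    refine toSubmodule_adjoin_insert_le _ _ (le_trans ?_ (mul_sup_sandwich_mul_le_sandwich
      hcomm' (hsq' _ (by omega) hk) hEF (tlSubalgebra_mono (Nat.le_succ j)) (hone _)))
    gcongr
    exact ih (by omega)

end TemperleyLieb

theorem markov_trace_unique_general
    {R : Type*} [Ring R] [Algebra ℂ R] (n : ℕ) (d : ℂ)
    (E : ℕ → R)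
    (hcomm : ∀ i j, 1 ≤ i → i ≤ n - 1 → 1 ≤ j → j ≤ n - 1 →
      (i + 2 ≤ j ∨ j + 2 ≤ i) → E i * E j = E j * E i)
    (hEiE' : ∀ i, 1 ≤ i → i + 1 ≤ n - 1 → E (i + 1) * E i * E (i + 1) = E (i + 1))
    (hsq : ∀ i, 1 ≤ i → i ≤ n - 1 → E i * E i = d • E i)
    (tr tr' : R →ₗ[ℂ] ℂ)
    (h1 : tr 1 = 1) (h1' : tr' 1 = 1)
    (h2 : ∀ X Y : R, tr (X * Y) = tr (Y * X))
    (h2' : ∀ X Y : R, tr' (X * Y) = tr' (Y * X))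
    (h3 : ∀ m : ℕ, 2 ≤ m → m ≤ n →
      ∀ X ∈ Algebra.adjoin ℂ (E '' {i | 1 ≤ i ∧ i ≤ m - 2}),
        tr (X * E (m - 1)) = d⁻¹ * tr X)
    (h3' : ∀ m : ℕ, 2 ≤ m → m ≤ n →
      ∀ X ∈ Algebra.adjoin ℂ (E '' {i | 1 ≤ i ∧ i ≤ m - 2}),
        tr' (X * E (m - 1)) = d⁻¹ * tr' X) :
    ∀ X ∈ Algebra.adjoin ℂ (E '' {i | 1 ≤ i ∧ i ≤ n - 1}), tr X = tr' X := by
  suffices ∀ k ≤ n - 1, (tlSubalgebra ℂ E k).toSubmodule ≤ LinearMap.eqLocus tr tr' from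
    fun X hX => this (n - 1) le_rfl hX
  intro k hk
  induction k with
  | zero =>
    rw [tlSubalgebra_zero, Algebra.toSubmodule_bot, one_eq_span, span_singleton_le_iff_mem]
    exact h1.trans h1'.symm
  | succ k ih =>
    refine (toSubmodule_tlSubalgebra_succ_le hcomm hEiE' hsq hk).trans ?_
    -- `h3 (k + 2)` is stated for `TL_{k+2}`, since `k + 2 - 2` reduces to `k`.
    exact toSubmodule_sup_sandwich_le_eqLocus h2 h2' (ih (by omega))
      (h3 (k + 2) (by omega) (by omega)) (h3' (k + 2) (by omega) (by omega))

/-- Uniqueness of the Markov trace.  Any two linear functionals on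
`TL_n(d)` (formalized as the subalgebra generated by elements `E_1,...,E_{n-1}`
satisfying the Temperley-Lieb relations) satisfying (1) `tr 1 = 1`,
(2) `tr(XY) = tr(YX)`, and (3) the Markov property
`tr(X·E_{m-1}) = (1/d)·tr(X)` for `X ∈ TL_{m-1}(d)` at every level `m ≤ n`,
are equal (on `TL_n(d)`). -/
theorem markov_trace_unique
    {R : Type*} [Ring R] [Algebra ℂ R] (n : ℕ) (d : ℂ) (hd : d ≠ 0)
    (E : ℕ → R)
    (hcomm : ∀ i j, 1 ≤ i → i ≤ n - 1 → 1 ≤ j → j ≤ n - 1 →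
      (i + 2 ≤ j ∨ j + 2 ≤ i) → E i * E j = E j * E i)
    (hEiE : ∀ i, 1 ≤ i → i + 1 ≤ n - 1 → E i * E (i + 1) * E i = E i)
    (hEiE' : ∀ i, 1 ≤ i → i + 1 ≤ n - 1 → E (i + 1) * E i * E (i + 1) = E (i + 1))
    (hsq : ∀ i, 1 ≤ i → i ≤ n - 1 → E i * E i = d • E i)
    (tr tr' : R →ₗ[ℂ] ℂ)
    (h1 : tr 1 = 1) (h1' : tr' 1 = 1)
    (h2 : ∀ X Y : R, tr (X * Y) = tr (Y * X))
    (h2' : ∀ X Y : R, tr' (X * Y) = tr' (Y * X))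
    (h3 : ∀ m : ℕ, 2 ≤ m → m ≤ n →
      ∀ X ∈ Algebra.adjoin ℂ (E '' {i | 1 ≤ i ∧ i ≤ m - 2}),
        tr (X * E (m - 1)) = d⁻¹ * tr X)
    (h3' : ∀ m : ℕ, 2 ≤ m → m ≤ n →
      ∀ X ∈ Algebra.adjoin ℂ (E '' {i | 1 ≤ i ∧ i ≤ m - 2}),
        tr' (X * E (m - 1)) = d⁻¹ * tr' X) :
    ∀ X ∈ Algebra.adjoin ℂ (E '' {i | 1 ≤ i ∧ i ≤ n - 1}), tr X = tr' X :=
  markov_trace_unique_general n d E hcomm hEiE' hsq tr tr' h1 h1' h2 h2' h3 h3'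
end

section
/- The weighted trace Tr_n satisfies the Markov property: for any operator X of the form X' ⊗ I (with X' preserving the path subspaces on the first n-1 qubits), Tr_n(X·Φ_{n-1}) = (1/d)·Tr_n(X), where d = 2cos(π/k). -/
open scoped Classical

/-- `λ_ℓ = sin(πℓ/k)` for `ℓ ∈ {1,...,k-1}`, and `0` otherwise. -/
noncomputable def lam (k : ℕ) (m : ℤ) : ℝ :=
  if 1 ≤ m ∧ m ≤ (k : ℤ) - 1 then Real.sin (Real.pi * m / k) else 0

/-- Read bit `m` of an `n`-bit string (default `false` out of range). -/
def bit {n : ℕ} (x : Fin n → Bool) (m : ℕ) : Bool :=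
  if h : m < n then x ⟨m, h⟩ else false

/-- The vertex of the line graph `G_k` reached after the first `i` steps of the
bit string `x` (a `1` is a step right, a `0` a step left), starting at vertex `1`. -/
def ht {n : ℕ} (x : Fin n → Bool) (i : ℕ) : ℤ :=
  1 + ∑ j : Fin n, if (j : ℕ) < i then (if x j then 1 else -1) else 0

/-- `x` encodes a path on `G_k`: it starts at vertex `1` and stays in `{1,...,k-1}`. -/
def validPath (k : ℕ) {n : ℕ} (x : Fin n → Bool) : Prop :=
  ∀ i : Fin (n + 1), 1 ≤ ht x (i : ℕ) ∧ ht x (i : ℕ) ≤ (k : ℤ) - 1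

/-- The path-model operator `Φ_i` (`0`-indexed: it acts on qubits `i, i+1`), as a
matrix on the space spanned by `n`-bit strings.  It is supported on valid paths,
annihilates `|00⟩` and `|11⟩` on qubits `i,i+1`, and acts on the span of `|01⟩,|10⟩`
at height `z` (the vertex reached after the first `i` steps) by the 2×2 matrix with
diagonal `λ_{z-1}/λ_z, λ_{z+1}/λ_z` and off-diagonal `sqrt(λ_{z+1}λ_{z-1})/λ_z`. -/
noncomputable def PhiMat (k n : ℕ) (i : ℕ) : Matrix (Fin n → Bool) (Fin n → Bool) ℂ :=
  fun x y =>
    if (∀ j : Fin n, (j : ℕ) ≠ i → (j : ℕ) ≠ i + 1 → x j = y j) ∧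
        validPath k x ∧ validPath k y then
      (match (bit x i, bit x (i + 1)), (bit y i, bit y (i + 1)) with
        | (false, true), (false, true) =>
            ((lam k (ht y i - 1) / lam k (ht y i) : ℝ) : ℂ)
        | (true, false), (true, false) =>
            ((lam k (ht y i + 1) / lam k (ht y i) : ℝ) : ℂ)
        | (false, true), (true, false) =>
            ((Real.sqrt (lam k (ht y i + 1) * lam k (ht y i - 1)) / lam k (ht y i) : ℝ) : ℂ)
        | (true, false), (false, true) =>
            ((Real.sqrt (lam k (ht y i + 1) * lam k (ht y i - 1)) / lam k (ht y i) : ℝ) : ℂ)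
        | _, _ => (0 : ℂ))
    else 0

/-- The weighted trace on the full `n`-qubit space, restricted to valid paths:
`Tr_n(W) = (Σ_{valid x} λ_{end(x)} W x x) / N` with `N = Σ_{valid x} λ_{end(x)}`. -/
noncomputable def TrNFull (n k : ℕ) (W : Matrix (Fin n → Bool) (Fin n → Bool) ℂ) : ℂ :=
  (∑ x ∈ Finset.univ.filter (fun x : Fin n → Bool => validPath k x),
      (lam k (ht x n) : ℂ) * W x x) /
    (∑ x ∈ Finset.univ.filter (fun x : Fin n → Bool => validPath k x),
      (lam k (ht x n) : ℂ))

/-- Restriction of an `n`-bit string to its first `n - 1` bits. -/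
def front {n : ℕ} (x : Fin n → Bool) : Fin (n - 1) → Bool :=
  fun j => x ⟨(j : ℕ), lt_of_lt_of_le j.2 (Nat.sub_le n 1)⟩

lemma mk15_bit_lt {n : ℕ} (x : Fin n → Bool) (m : ℕ) (h : m < n) : bit x m = x ⟨m, h⟩ :=
  dif_pos h

lemma mk15_ht_eq_sum_range {n : ℕ} (x : Fin n → Bool) (i : ℕ) (hi : i ≤ n) :
    ht x i = 1 + ∑ m ∈ Finset.range i, (if bit x m then (1:ℤ) else -1) := by
  unfold ht
  congr 1
  have h0 : ∑ j : Fin n, (if (j:ℕ) < i then (if x j then (1:ℤ) else -1) else 0)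
      = ∑ j : Fin n, (if (j:ℕ) < i then (if bit x (j:ℕ) then (1:ℤ) else -1) else 0) :=
    Finset.sum_congr rfl fun j _ => by simp [bit]
  have h1 := Fin.sum_univ_eq_sum_range
    (fun m => if m < i then (if bit x m then (1:ℤ) else -1) else 0) n
  have h2 := Finset.sum_subset (f := fun m => if m < i then (if bit x m then (1:ℤ) else -1) else 0)
    (Finset.range_subset_range.2 hi)
    (fun m _ hm => if_neg (fun h => hm (Finset.mem_range.2 h)))
  rw [h0, h1]
  exact h2.symm.trans (Finset.sum_congr rfl (fun m hm => if_pos (Finset.mem_range.1 hm)))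

lemma mk15_ht_succ {n : ℕ} (x : Fin n → Bool) (i : ℕ) (h : i < n) :
    ht x (i+1) = ht x i + (if bit x i then 1 else -1) := by
  rw [mk15_ht_eq_sum_range x (i+1) h, mk15_ht_eq_sum_range x i h.le, Finset.sum_range_succ]
  ring

def extB (n : ℕ) (w : Fin (n-1) → Bool) (b : Bool) : Fin n → Bool :=
  fun j => if h : (j:ℕ) < n - 1 then w ⟨j, h⟩ else b

lemma mk15_front_extB (n : ℕ) (w : Fin (n-1) → Bool) (b : Bool) : front (extB n w b) = w := by
  funext j
  simp [front, extB, j.2]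

lemma mk15_bit_extB_lt (n : ℕ) (w : Fin (n-1) → Bool) (b : Bool) (m : ℕ) (h : m < n-1) :
    bit (extB n w b) m = bit w m := by
  rw [mk15_bit_lt _ m (by omega), mk15_bit_lt _ m h]
  simp [extB, h]

lemma mk15_extB_last (n : ℕ) (hn : 1 ≤ n) (w : Fin (n-1) → Bool) (b : Bool) :
    extB n w b ⟨n-1, by omega⟩ = b := by
  simp [extB]

lemma mk15_ht_extB (n : ℕ) (w : Fin (n-1) → Bool) (b : Bool) (i : ℕ) (hi : i ≤ n-1) :
    ht (extB n w b) i = ht w i := by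
  rw [mk15_ht_eq_sum_range _ i (by omega), mk15_ht_eq_sum_range w i hi]
  congr 1
  exact Finset.sum_congr rfl fun m hm => by
    rw [mk15_bit_extB_lt n w b m (lt_of_lt_of_le (Finset.mem_range.1 hm) hi)]

lemma mk15_ht_extB_top (n : ℕ) (hn : 1 ≤ n) (w : Fin (n-1) → Bool) (b : Bool) :
    ht (extB n w b) n = ht w (n-1) + (if b then 1 else -1) := by
  have h := mk15_ht_succ (extB n w b) (n-1) (by omega)
  have e : n - 1 + 1 = n := by omega
  rw [e] at h
  rw [h, mk15_ht_extB n w b (n-1) le_rfl, mk15_bit_lt _ (n-1) (by omega),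
    mk15_extB_last n hn]

lemma mk15_valid_extB (n k : ℕ) (hn : 1 ≤ n) (w : Fin (n-1) → Bool) (b : Bool) :
    validPath k (extB n w b) ↔ validPath k w ∧
      (1 ≤ ht w (n-1) + (if b then 1 else -1) ∧
        ht w (n-1) + (if b then 1 else -1) ≤ (k:ℤ) - 1) := by
  constructor
  · intro h
    refine ⟨fun i => ?_, ?_⟩
    · have hi : (i:ℕ) ≤ n - 1 := by have := i.2; omega
      simpa [mk15_ht_extB n w b i hi] using h ⟨(i:ℕ), by omega⟩
    · simpa [mk15_ht_extB_top n hn w b] using h ⟨n, by omega⟩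
  · rintro ⟨hw, h1, h2⟩ i
    by_cases hc : (i:ℕ) ≤ n - 1
    · rw [mk15_ht_extB n w b i hc]
      simpa using hw ⟨(i:ℕ), by omega⟩
    · have hin : (i:ℕ) = n := by have := i.2; omega
      rw [hin, mk15_ht_extB_top n hn w b]
      exact ⟨h1, h2⟩

noncomputable def splitE (n : ℕ) (hn : 1 ≤ n) : (Fin n → Bool) ≃ (Fin (n-1) → Bool) × Bool where
  toFun x := (front x, x ⟨n-1, by omega⟩)
  invFun p := extB n p.1 p.2
  left_inv x := by
    funext j
    by_cases h : (j:ℕ) < n - 1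
    · simp [extB, h, front]
    · have hj : (j:ℕ) = n - 1 := by have := j.2; omega
      have : j = ⟨n-1, by omega⟩ := Fin.ext (by simpa using hj)
      rw [this]
      simp [extB]
  right_inv p := by
    obtain ⟨w, b⟩ := p
    dsimp only
    rw [mk15_front_extB, mk15_extB_last n hn]

lemma mk15_sum_split {n : ℕ} (hn : 1 ≤ n) (f : (Fin n → Bool) → ℂ) :
    ∑ x, f x = ∑ w : Fin (n-1) → Bool, ∑ b : Bool, f (extB n w b) := by
  rw [← Equiv.sum_comp (splitE n hn).symm f, Fintype.sum_prod_type]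
  exact Finset.sum_congr rfl fun _ _ => Finset.sum_congr rfl fun _ _ => rfl

lemma mk15_lam_pos (k : ℕ) (u : ℤ) (h1 : 1 ≤ u) (h2 : u ≤ (k:ℤ) - 1) : 0 < lam k u := by
  have hk : 0 < k := by omega
  have hk0 : (0:ℝ) < k := by exact_mod_cast hk
  rw [lam, if_pos ⟨h1, h2⟩]
  apply Real.sin_pos_of_pos_of_lt_pi
  · have hu : (0:ℝ) < u := by exact_mod_cast h1
    exact div_pos (mul_pos Real.pi_pos hu) hk0
  · rw [div_lt_iff₀ hk0]
    have hcast : (u:ℝ) < k := by exact_mod_cast (by omega : u < (k:ℤ))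
    exact mul_lt_mul_of_pos_left hcast Real.pi_pos

lemma mk15_lam_zero (k : ℕ) (u : ℤ) (h : ¬(1 ≤ u ∧ u ≤ (k:ℤ)-1)) : lam k u = 0 := if_neg h

lemma mk15_lam_rec (k : ℕ) (hk : 2 ≤ k) (u : ℤ) (h1 : 1 ≤ u) (h2 : u ≤ (k:ℤ)-1) :
    lam k (u-1) + lam k (u+1) = 2 * Real.cos (Real.pi / k) * lam k u := by
  have hk0 : (k:ℝ) ≠ 0 := Nat.cast_ne_zero.2 (by omega)
  have e0 : lam k u = Real.sin (Real.pi * u / k) := by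
    rw [lam, if_pos ⟨h1, h2⟩]
  have e1 : lam k (u-1) = Real.sin (Real.pi * ((u:ℝ)-1) / k) := by
    by_cases h : 1 ≤ u - 1
    · rw [lam, if_pos ⟨h, by omega⟩]
      push_cast
      ring_nf
    · have hu : u = 1 := by omega
      subst hu
      rw [lam, if_neg (by omega)]
      norm_num
  have e2 : lam k (u+1) = Real.sin (Real.pi * ((u:ℝ)+1) / k) := by
    by_cases h : u + 1 ≤ (k:ℤ) - 1
    · rw [lam, if_pos ⟨by omega, h⟩]
      push_cast
      ring_nf
    · have hu : u = (k:ℤ) - 1 := by omega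
      subst hu
      rw [lam, if_neg (by omega)]
      have hr : Real.pi * (((((k:ℤ) - 1 : ℤ)):ℝ) + 1) / k = Real.pi := by
        push_cast
        rw [show (k:ℝ) - 1 + 1 = (k:ℝ) from by ring, mul_div_assoc, div_self hk0, mul_one]
      rw [hr, Real.sin_pi]
  rw [e0, e1, e2]
  have hA : Real.pi * ((u:ℝ)-1)/k = Real.pi * u / k - Real.pi / k := by ring
  have hB : Real.pi * ((u:ℝ)+1)/k = Real.pi * u / k + Real.pi / k := by ring
  rw [hA, hB, Real.sin_sub, Real.sin_add]
  ring

lemma mk15_cos_pos (k : ℕ) (hk : 3 ≤ k) : 0 < Real.cos (Real.pi / k) := by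
  have hk0 : (0:ℝ) < k := by exact_mod_cast (by omega : 0 < k)
  have hpos : 0 < Real.pi / k := div_pos Real.pi_pos hk0
  apply Real.cos_pos_of_mem_Ioo
  constructor
  · linarith [Real.pi_pos]
  · have : Real.pi / k < Real.pi / 2 :=
      div_lt_div_of_pos_left Real.pi_pos (by norm_num)
        (by exact_mod_cast (by omega : 2 < k))
    linarith

lemma mk15_not_valid_two {n : ℕ} (hn : 1 ≤ n) (x : Fin n → Bool) : ¬ validPath 2 x := by
  intro h
  have h1 : 1 ≤ ht x 1 ∧ ht x 1 ≤ (2:ℤ) - 1 := h ⟨1, by omega⟩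
  have h2 : ht x 1 = 1 + (if bit x 0 then 1 else -1) := by
    rw [mk15_ht_eq_sum_range x 1 hn, Finset.sum_range_one]
  rcases hb : bit x 0 <;> rw [hb] at h2 <;> simp at h2 <;> omega

/-- the Markov property of the weighted trace: for any operator `X` of
the form `X' ⊗ I` (acting as `X'` on the first `n-1` qubits and trivially on the
last), with `X'` preserving the path subspaces on the first `n-1` qubits,
`Tr_n(X·Φ_{n-1}) = (1/d)·Tr_n(X)` where `d = 2cos(π/k)`. -/
theorem TrN_markov_property (n k : ℕ) (hn : 2 ≤ n) (hk : 2 ≤ k)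
    (X' : Matrix (Fin (n - 1) → Bool) (Fin (n - 1) → Bool) ℂ)
    (hX' : ∀ a b : Fin (n - 1) → Bool, X' a b ≠ 0 →
      validPath k a ∧ validPath k b ∧ ht a (n - 1) = ht b (n - 1))
    (X : Matrix (Fin n → Bool) (Fin n → Bool) ℂ)
    (hX : ∀ x y : Fin n → Bool,
      X x y = if x ⟨n - 1, Nat.sub_lt (by omega) one_pos⟩ =
          y ⟨n - 1, Nat.sub_lt (by omega) one_pos⟩ then
        X' (front x) (front y) else 0) :
    TrNFull n k (X * PhiMat k n (n - 2)) =
      (1 / (2 * Real.cos (Real.pi / k) : ℂ)) * TrNFull n k X := by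
  have hn1 : 1 ≤ n := by omega
  have hnn : n - 2 + 1 = n - 1 := by omega
  -- diagonal extraction
  have hdiag : ∀ x : Fin n → Bool,
      (X * PhiMat k n (n-2)) x x = X x x * PhiMat k n (n-2) x x := by
    intro x
    rw [Matrix.mul_apply]
    apply Finset.sum_eq_single x
    · intro y _ hyx
      by_cases hxy : x ⟨n - 1, Nat.sub_lt (by omega) one_pos⟩ =
          y ⟨n - 1, Nat.sub_lt (by omega) one_pos⟩
      swap
      · rw [hX x y, if_neg hxy, zero_mul]
      by_cases hP : PhiMat k n (n-2) y x = 0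
      · rw [hP, mul_zero]
      exfalso
      rw [PhiMat] at hP
      by_cases hc : (∀ j : Fin n, (j:ℕ) ≠ n-2 → (j:ℕ) ≠ (n-2)+1 → y j = x j) ∧
          validPath k y ∧ validPath k x
      swap
      · exact hP (if_neg hc)
      obtain ⟨hagree, hvy, hvx⟩ := hc
      rw [if_pos ⟨hagree, hvy, hvx⟩] at hP
      have hbn : bit y ((n-2)+1) = bit x ((n-2)+1) := by
        rw [hnn, mk15_bit_lt y (n-1) (by omega), mk15_bit_lt x (n-1) (by omega)]
        exact hxy.symm
      have hkey : bit y (n-2) = bit x (n-2) → y = x := by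
        intro hb
        funext j
        by_cases h2 : (j:ℕ) = n-2
        · rw [mk15_bit_lt y (n-2) (by omega), mk15_bit_lt x (n-2) (by omega)] at hb
          have hj : j = ⟨n-2, by omega⟩ := Fin.ext (by simpa using h2)
          rw [hj]
          exact hb
        by_cases h1 : (j:ℕ) = n-1
        · have hb2 := hbn
          rw [hnn, mk15_bit_lt y (n-1) (by omega), mk15_bit_lt x (n-1) (by omega)] at hb2
          have hj : j = ⟨n-1, by omega⟩ := Fin.ext (by simpa using h1)
          rw [hj]
          exact hb2
        · exact hagree j h2 (by omega)
      rcases h3 : bit y (n-2) with _|_ <;> rcases h4 : bit x (n-2) with _|_ <;>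
        rcases h5 : bit y ((n-2)+1) with _|_ <;>
        rw [← hbn] at hP <;> rw [h3, h4, h5] at hP <;>
        first
          | exact hP rfl
          | exact hyx (hkey (h3.trans h4.symm))
    · intro hx
      exact absurd (Finset.mem_univ x) hx
  -- values of X on the diagonal of extended strings
  have hXb : ∀ (w : Fin (n-1) → Bool) (b : Bool),
      X (extB n w b) (extB n w b) = X' w w := by
    intro w b
    rw [hX, if_pos rfl, mk15_front_extB]
  have hmain : (∑ x ∈ Finset.univ.filter (fun x : Fin n → Bool => validPath k x),
        (lam k (ht x n) : ℂ) * (X * PhiMat k n (n - 2)) x x)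
          * (2 * Real.cos (Real.pi / k) : ℂ)
      = ∑ x ∈ Finset.univ.filter (fun x : Fin n → Bool => validPath k x),
        (lam k (ht x n) : ℂ) * X x x := by
    have hbit1 : ∀ (w : Fin (n-1) → Bool) (b : Bool),
        bit (extB n w b) (n-2) = bit w (n-2) :=
      fun w b => mk15_bit_extB_lt n w b (n-2) (by omega)
    have hbit2 : ∀ (w : Fin (n-1) → Bool) (b : Bool), bit (extB n w b) ((n-2)+1) = b := by
      intro w b
      rw [hnn, mk15_bit_lt _ (n-1) (by omega), mk15_extB_last n hn1]
    have hht2 : ∀ (w : Fin (n-1) → Bool) (b : Bool),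
        ht (extB n w b) (n-2) = ht w (n-2) :=
      fun w b => mk15_ht_extB n w b (n-2) (by omega)
    have hnum : ∀ (g : (Fin n → Bool) → ℂ),
        ∑ x ∈ Finset.univ.filter (fun x : Fin n → Bool => validPath k x), g x
          = ∑ w : Fin (n-1) → Bool, ∑ b : Bool,
              (if validPath k (extB n w b) then g (extB n w b) else 0) := by
      intro g
      rw [Finset.sum_filter]
      exact mk15_sum_split hn1 _
    rw [hnum (fun x => (lam k (ht x n) : ℂ) * (X * PhiMat k n (n - 2)) x x),
      hnum (fun x => (lam k (ht x n) : ℂ) * X x x), Finset.sum_mul]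
    apply Finset.sum_congr rfl
    intro w _
    by_cases hvw : validPath k w
    swap
    · have h1 : ∀ b, ¬ validPath k (extB n w b) := fun b hvb =>
        hvw ((mk15_valid_extB n k hn1 w b).1 hvb).1
      rw [Fintype.sum_bool, Fintype.sum_bool, if_neg (h1 true), if_neg (h1 false),
        if_neg (h1 true), if_neg (h1 false)]
      ring
    · have hu : 1 ≤ ht w (n-1) ∧ ht w (n-1) ≤ (k:ℤ)-1 := hvw ⟨n-1, by omega⟩
      have hz : 1 ≤ ht w (n-2) ∧ ht w (n-2) ≤ (k:ℤ)-1 := hvw ⟨n-2, by omega⟩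
      have hlamz : (0:ℝ) < lam k (ht w (n-2)) := mk15_lam_pos k _ hz.1 hz.2
      have hlamzC : (lam k (ht w (n-2)) : ℂ) ≠ 0 := Complex.ofReal_ne_zero.2 hlamz.ne'
      have hzu : ht w (n-1) = ht w (n-2) + (if bit w (n-2) then 1 else -1) := by
        have h := mk15_ht_succ w (n-2) (by omega)
        rwa [hnn] at h
      have hrec := mk15_lam_rec k hk (ht w (n-1)) hu.1 hu.2
      have hrecC : (lam k (ht w (n-1) - 1) : ℂ) + (lam k (ht w (n-1) + 1) : ℂ)
          = (2 * Real.cos (Real.pi / k) : ℂ) * (lam k (ht w (n-1)) : ℂ) := by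
        exact_mod_cast hrec
      rw [Fintype.sum_bool, Fintype.sum_bool]
      rcases ha : bit w (n-2) with _|_
      · -- ha : bit w (n-2) = false, so ht w (n-1) = ht w (n-2) - 1
        have huz : ht w (n-1) = ht w (n-2) - 1 := by rw [hzu, ha]; norm_num; omega
        have ea : ht w (n-1) + (if (true : Bool) then (1:ℤ) else -1) = ht w (n-2) := by
          rw [huz]; norm_num
        have eb : ht w (n-2) - 1 = ht w (n-1) := by omega
        have ec : ht w (n-1) + (if (false : Bool) then (1:ℤ) else -1) = ht w (n-1) - 1 := by
          norm_num
          omega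
        have hvb1 : validPath k (extB n w true) := by
          apply (mk15_valid_extB n k hn1 w true).2
          refine ⟨hvw, ?_⟩
          rw [ea]
          exact hz
        have hPhi1 : PhiMat k n (n-2) (extB n w true) (extB n w true)
            = ((lam k (ht w (n-2) - 1) / lam k (ht w (n-2)) : ℝ) : ℂ) := by
          rw [PhiMat, if_pos ⟨fun _ _ _ => rfl, hvb1, hvb1⟩]
          simp [hbit1, hbit2, hht2, ha]
        have hT1 : (if validPath k (extB n w true) then
              (lam k (ht (extB n w true) n) : ℂ)
                * (X * PhiMat k n (n - 2)) (extB n w true) (extB n w true) else 0)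
            = X' w w * (lam k (ht w (n-1)) : ℂ) := by
          rw [if_pos hvb1, hdiag, hXb, hPhi1, mk15_ht_extB_top n hn1 w true, ea, eb]
          push_cast
          field_simp
        have hT0 : (if validPath k (extB n w false) then
              (lam k (ht (extB n w false) n) : ℂ)
                * (X * PhiMat k n (n - 2)) (extB n w false) (extB n w false) else 0) = 0 := by
          by_cases hvb : validPath k (extB n w false)
          · rw [if_pos hvb, hdiag, hXb]
            have hPhi0 : PhiMat k n (n-2) (extB n w false) (extB n w false) = 0 := by
              rw [PhiMat, if_pos ⟨fun _ _ _ => rfl, hvb, hvb⟩]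
              simp [hbit1, hbit2, ha]
            rw [hPhi0]
            ring
          · rw [if_neg hvb]
        have hR1 : (if validPath k (extB n w true) then
              (lam k (ht (extB n w true) n) : ℂ) * X (extB n w true) (extB n w true) else 0)
            = (lam k (ht w (n-1) + 1) : ℂ) * X' w w := by
          rw [if_pos hvb1, hXb, mk15_ht_extB_top n hn1 w true, ea,
            show ht w (n-2) = ht w (n-1) + 1 from by omega]
        have hR0 : (if validPath k (extB n w false) then
              (lam k (ht (extB n w false) n) : ℂ) * X (extB n w false) (extB n w false) else 0)
            = (lam k (ht w (n-1) - 1) : ℂ) * X' w w := by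
          by_cases hvb : validPath k (extB n w false)
          · rw [if_pos hvb, hXb, mk15_ht_extB_top n hn1 w false, ec]
          · rw [if_neg hvb]
            have hno : ¬(1 ≤ ht w (n-1) - 1 ∧ ht w (n-1) - 1 ≤ (k:ℤ)-1) := by
              intro hc
              exact hvb ((mk15_valid_extB n k hn1 w false).2 ⟨hvw, by rw [ec]; exact hc⟩)
            rw [mk15_lam_zero k _ hno]
            simp
        rw [hT1, hT0, hR1, hR0]
        linear_combination (-(X' w w)) * hrecC
      · -- ha : bit w (n-2) = true, so ht w (n-1) = ht w (n-2) + 1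
        have huz : ht w (n-1) = ht w (n-2) + 1 := by rw [hzu, ha]; norm_num
        have ea : ht w (n-1) + (if (false : Bool) then (1:ℤ) else -1) = ht w (n-2) := by
          rw [huz]; norm_num
        have eb : ht w (n-2) + 1 = ht w (n-1) := by omega
        have ec : ht w (n-1) + (if (true : Bool) then (1:ℤ) else -1) = ht w (n-1) + 1 := by
          norm_num
        have hvb0 : validPath k (extB n w false) := by
          apply (mk15_valid_extB n k hn1 w false).2
          refine ⟨hvw, ?_⟩
          rw [ea]
          exact hz
        have hPhi0 : PhiMat k n (n-2) (extB n w false) (extB n w false)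
            = ((lam k (ht w (n-2) + 1) / lam k (ht w (n-2)) : ℝ) : ℂ) := by
          rw [PhiMat, if_pos ⟨fun _ _ _ => rfl, hvb0, hvb0⟩]
          simp [hbit1, hbit2, hht2, ha]
        have hT0 : (if validPath k (extB n w false) then
              (lam k (ht (extB n w false) n) : ℂ)
                * (X * PhiMat k n (n - 2)) (extB n w false) (extB n w false) else 0)
            = X' w w * (lam k (ht w (n-1)) : ℂ) := by
          rw [if_pos hvb0, hdiag, hXb, hPhi0, mk15_ht_extB_top n hn1 w false, ea, eb]
          push_cast
          field_simp
        have hT1 : (if validPath k (extB n w true) then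
              (lam k (ht (extB n w true) n) : ℂ)
                * (X * PhiMat k n (n - 2)) (extB n w true) (extB n w true) else 0) = 0 := by
          by_cases hvb : validPath k (extB n w true)
          · rw [if_pos hvb, hdiag, hXb]
            have hPhi1 : PhiMat k n (n-2) (extB n w true) (extB n w true) = 0 := by
              rw [PhiMat, if_pos ⟨fun _ _ _ => rfl, hvb, hvb⟩]
              simp [hbit1, hbit2, ha]
            rw [hPhi1]
            ring
          · rw [if_neg hvb]
        have hR0 : (if validPath k (extB n w false) then
              (lam k (ht (extB n w false) n) : ℂ) * X (extB n w false) (extB n w false) else 0)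
            = (lam k (ht w (n-1) - 1) : ℂ) * X' w w := by
          rw [if_pos hvb0, hXb, mk15_ht_extB_top n hn1 w false, ea,
            show ht w (n-2) = ht w (n-1) - 1 from by omega]
        have hR1 : (if validPath k (extB n w true) then
              (lam k (ht (extB n w true) n) : ℂ) * X (extB n w true) (extB n w true) else 0)
            = (lam k (ht w (n-1) + 1) : ℂ) * X' w w := by
          by_cases hvb : validPath k (extB n w true)
          · rw [if_pos hvb, hXb, mk15_ht_extB_top n hn1 w true, ec]
          · rw [if_neg hvb]
            have hno : ¬(1 ≤ ht w (n-1) + 1 ∧ ht w (n-1) + 1 ≤ (k:ℤ)-1) := by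
              intro hc
              exact hvb ((mk15_valid_extB n k hn1 w true).2 ⟨hvw, by rw [ec]; exact hc⟩)
            rw [mk15_lam_zero k _ hno]
            simp
        rw [hT1, hT0, hR1, hR0]
        linear_combination (-(X' w w)) * hrecC
  by_cases hD : (2 * Real.cos (Real.pi / k) : ℂ) = 0
  · have hk2 : k = 2 := by
      by_contra hne
      have h3 : 3 ≤ k := by omega
      have hc := mk15_cos_pos k h3
      exact (mul_ne_zero two_ne_zero (Complex.ofReal_ne_zero.2 hc.ne')) hD
    subst hk2
    have hempty : Finset.univ.filter (fun x : Fin n → Bool => validPath 2 x) = ∅ :=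
      Finset.eq_empty_of_forall_notMem fun x hx =>
        mk15_not_valid_two hn1 x (Finset.mem_filter.1 hx).2
    rw [TrNFull, TrNFull, hempty]
    simp
  · rw [TrNFull, TrNFull, ← hmain]
    have halg : ∀ S N : ℂ, (1 / (2 * Real.cos (Real.pi / k) : ℂ))
        * ((S * (2 * Real.cos (Real.pi / k) : ℂ)) / N) = S / N := by
      intro S N
      rw [mul_comm S, ← mul_div_assoc, ← mul_assoc, one_div_mul_cancel hD, one_mul]
    exact (halg _ _).symm
end

section
/- The projection onto the state |α⟩ = |1010...10⟩ (n/2 copies of '10') equals d^{-n/2}·Φ_1Φ_3···Φ_{n-1}, where Φ_i are the path-model representation operators and d = 2cos(π/k): i.e., Φ_1Φ_3···Φ_{n-1} = d^{n/2}·|α⟩⟨α| on the path space H_{n,k}. -/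
open scoped Classical

/-- The state `|α⟩ = |1010...10⟩` (`1` at even positions, `0` at odd ones). -/
def alphaString (n : ℕ) : Fin n → Bool := fun j => decide ((j : ℕ) % 2 = 0)

/-! Since `λ_0 = 0`, at vertex `1` of `G_k` every `Φ_i` is diagonal: it multiplies a valid path
whose steps `i, i+1` are `10` by `λ_2/λ_1 = 2cos(π/k) = d` and kills every other path. A path
beginning with `t` copies of `10` is back at vertex `1` after `2t` steps, so by induction on `t`,
`Φ_0 Φ_2 ⋯ Φ_{2t-2}` restricted to valid paths is `d^t` times the projection onto the valid
paths beginning with `t` copies of `10`; for `t = m` the only such string is `α`. -/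

lemma lam_zero (k : ℕ) : lam k 0 = 0 := by simp [lam]

lemma lam_two_div_lam_one {k : ℕ} (hk : 2 ≤ k) :
    lam k 2 / lam k 1 = 2 * Real.cos (Real.pi / k) := by
  obtain rfl | hk3 := hk.eq_or_lt
  · norm_num [lam]
  have hsin : Real.sin (Real.pi / k) ≠ 0 := by
    refine (Real.sin_pos_of_pos_of_lt_pi (by positivity) ?_).ne'
    exact div_lt_self Real.pi_pos (by exact_mod_cast hk)
  have h2 : (2 : ℤ) ≤ k - 1 := by omega
  simp only [lam, show (1 : ℤ) ≤ 2 by norm_num, h2, le_refl, show (1 : ℤ) ≤ k - 1 by omega,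
    and_self, if_true, Int.cast_ofNat, Int.cast_one]
  rw [mul_comm, mul_div_assoc, Real.sin_two_mul, mul_one]
  field_simp

lemma bit_val {n : ℕ} (x : Fin n → Bool) (j : Fin n) : bit x j = x j := by
  simp [bit]

lemma eq_of_forall_ne_of_bit_eq {n i : ℕ} {x y : Fin n → Bool}
    (h : ∀ j : Fin n, (j : ℕ) ≠ i → (j : ℕ) ≠ i + 1 → x j = y j)
    (hi : bit x i = bit y i) (hi' : bit x (i + 1) = bit y (i + 1)) : x = y := by
  funext j
  rw [← bit_val x, ← bit_val y]
  by_cases hj : (j : ℕ) = i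
  · rwa [hj]
  by_cases hj' : (j : ℕ) = i + 1
  · rwa [hj']
  rw [bit_val, bit_val, h j hj hj']

lemma ht_eq_one_add_sum_range {n : ℕ} (x : Fin n → Bool) {i : ℕ} (hi : i ≤ n) :
    ht x i = 1 + ∑ j ∈ Finset.range i, if bit x j then 1 else -1 := by
  simp_rw [ht, ← bit_val x]
  rw [Fin.sum_univ_eq_sum_range (fun j => if j < i then (if bit x j then (1 : ℤ) else -1) else 0),
    ← Finset.sum_filter]
  congr 2
  ext j
  simp only [Finset.mem_filter, Finset.mem_range]
  omega

lemma ht_succ {n : ℕ} (x : Fin n → Bool) {i : ℕ} (hi : i < n) :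
    ht x (i + 1) = ht x i + if bit x i then 1 else -1 := by
  rw [ht_eq_one_add_sum_range x hi, ht_eq_one_add_sum_range x hi.le, Finset.sum_range_succ,
    add_assoc]

lemma ht_congr {n : ℕ} {x y : Fin n → Bool} {i : ℕ} (h : ∀ j : Fin n, (j : ℕ) < i → x j = y j) :
    ht x i = ht y i := by
  rw [ht, ht]
  congr 1
  exact Finset.sum_congr rfl fun j _ => by by_cases hj : (j : ℕ) < i <;> simp [hj, h]

lemma phiMat_eq_zero_of_not_validPath {k n i : ℕ} {x y : Fin n → Bool}
    (h : ¬(validPath k x ∧ validPath k y)) : PhiMat k n i x y = 0 :=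
  if_neg fun hc => h hc.2

lemma phiMat_apply_of_ht_eq_one {k n i : ℕ} {x y : Fin n → Bool} (hx : ht x i = 1) :
    PhiMat k n i x y =
      if y = x ∧ validPath k x ∧ bit x i = true ∧ bit x (i + 1) = false
      then ((lam k 2 / lam k 1 : ℝ) : ℂ) else 0 := by
  unfold PhiMat
  by_cases hc : (∀ j : Fin n, (j : ℕ) ≠ i → (j : ℕ) ≠ i + 1 → x j = y j) ∧
      validPath k x ∧ validPath k y
  · rw [if_pos hc]
    obtain ⟨hagree, hvx, -⟩ := hc
    have hy : ht y i = 1 := (ht_congr fun j hj => (hagree j (by omega) (by omega)).symm).trans hx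
    by_cases hyx : y = x
    · subst hyx
      cases bit y i <;> cases bit y (i + 1) <;> simp [hy, hvx, lam_zero]
    · have hbits : ¬(bit x i = bit y i ∧ bit x (i + 1) = bit y (i + 1)) :=
        fun h => hyx (eq_of_forall_ne_of_bit_eq hagree h.1 h.2).symm
      rw [hy, if_neg (by tauto)]
      cases _ : bit x i <;> cases _ : bit x (i + 1) <;> cases _ : bit y i <;>
        cases _ : bit y (i + 1) <;> simp_all [lam_zero]
  · rw [if_neg hc, if_neg]
    rintro ⟨rfl, hvx, -⟩
    exact hc ⟨fun _ _ _ => rfl, hvx, hvx⟩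

def StartsWithTens {n : ℕ} (x : Fin n → Bool) (t : ℕ) : Prop :=
  ∀ j < t, bit x (2 * j) = true ∧ bit x (2 * j + 1) = false

lemma startsWithTens_succ {n : ℕ} {x : Fin n → Bool} {t : ℕ} :
    StartsWithTens x (t + 1) ↔
      StartsWithTens x t ∧ bit x (2 * t) = true ∧ bit x (2 * t + 1) = false :=
  Nat.forall_lt_succ_right

lemma ht_of_startsWithTens {n : ℕ} {x : Fin n → Bool} {t : ℕ} (ht2 : 2 * t ≤ n)
    (hx : StartsWithTens x t) : ht x (2 * t) = 1 := by
  induction t with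
  | zero => simp [ht]
  | succ t ih =>
    obtain ⟨hx, h1, h0⟩ := startsWithTens_succ.1 hx
    rw [show 2 * (t + 1) = 2 * t + 1 + 1 by ring, ht_succ x (by omega), ht_succ x (by omega),
      ih (by omega) hx, h1, h0]
    simp

lemma startsWithTens_iff_eq_alphaString {n m : ℕ} (hn : n = 2 * m) {x : Fin n → Bool} :
    StartsWithTens x m ↔ x = alphaString n := by
  constructor
  · intro hx
    funext j
    rw [← bit_val x, alphaString]
    obtain ⟨q, hq | hq⟩ := Nat.even_or_odd' (j : ℕ)
    · rw [hq, (hx q (by omega)).1]; simp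
    · rw [hq, (hx q (by omega)).2]; simp
  · rintro rfl j hj
    simp [bit, alphaString, show 2 * j < n by omega, show 2 * j + 1 < n by omega]

noncomputable def tensProj (k n t : ℕ) : Matrix (Fin n → Bool) (Fin n → Bool) ℂ :=
  Matrix.diagonal fun x => if validPath k x ∧ StartsWithTens x t then 1 else 0

lemma tensProj_zero_mul_phiMat (k n i : ℕ) : tensProj k n 0 * PhiMat k n i = PhiMat k n i := by
  ext x y
  by_cases hx : validPath k x
  · simp [tensProj, StartsWithTens, hx]
  · simp [tensProj, StartsWithTens, hx, phiMat_eq_zero_of_not_validPath]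

lemma phiMat_mul_tensProj_zero (k n i : ℕ) : PhiMat k n i * tensProj k n 0 = PhiMat k n i := by
  ext x y
  by_cases hy : validPath k y
  · simp [tensProj, StartsWithTens, hy]
  · simp [tensProj, StartsWithTens, hy, phiMat_eq_zero_of_not_validPath]

lemma tensProj_mul_phiMat {k n t : ℕ} (hk : 2 ≤ k) (ht : 2 * t ≤ n) :
    tensProj k n t * PhiMat k n (2 * t) =
      ((2 * Real.cos (Real.pi / k) : ℝ) : ℂ) • tensProj k n (t + 1) := by
  ext x y
  simp only [tensProj, Matrix.diagonal_mul, Matrix.smul_apply, Matrix.diagonal_apply,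
    startsWithTens_succ]
  by_cases hx : validPath k x ∧ StartsWithTens x t
  · rw [phiMat_apply_of_ht_eq_one (ht_of_startsWithTens ht hx.2), lam_two_div_lam_one hk]
    by_cases hyx : y = x
    · subst hyx
      simp [hx]
    · simp [hx, hyx, Ne.symm hyx]
  · have hx' : ¬(validPath k x ∧ StartsWithTens x t ∧ bit x (2 * t) = true ∧
        bit x (2 * t + 1) = false) := fun h => hx ⟨h.1, h.2.1⟩
    simp [hx, hx']

lemma prod_phiMat_mul_tensProj_zero {k n t : ℕ} (hk : 2 ≤ k) (ht : 2 * t ≤ n) :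
    ((List.range t).map fun j => PhiMat k n (2 * j)).prod * tensProj k n 0 =
      ((2 * Real.cos (Real.pi / k) : ℝ) : ℂ) ^ t • tensProj k n t := by
  induction t with
  | zero => simp
  | succ t ih =>
    rw [List.range_succ, List.map_append, List.prod_append, List.map_singleton,
      List.prod_singleton, Matrix.mul_assoc, phiMat_mul_tensProj_zero,
      ← tensProj_zero_mul_phiMat, ← Matrix.mul_assoc, ih (by omega), Matrix.smul_mul,
      tensProj_mul_phiMat hk (by omega), smul_smul, pow_succ]

/-- for even `n = 2m`, on the path space `H_{n,k}` (vectors supported on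
valid paths) the product `Φ_1 Φ_3 ⋯ Φ_{n-1}` (here `0`-indexed: `Φ_0 Φ_2 ⋯ Φ_{n-2}`)
equals `d^{n/2}·|α⟩⟨α|` with `d = 2cos(π/k)`; equivalently `|α⟩⟨α|` is
`d^{-n/2}·Φ_1Φ_3⋯Φ_{n-1}`. -/
theorem capcup_product_eq_projection (n k m : ℕ) (hk : 2 ≤ k) (hn : n = 2 * m)
    (v : (Fin n → Bool) → ℂ) (hv : ∀ x, ¬ validPath k x → v x = 0) :
    ∀ x : Fin n → Bool,
      (((List.range m).map (fun j => PhiMat k n (2 * j))).prod).mulVec v x =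
        if x = alphaString n then
          ((2 * Real.cos (Real.pi / k) : ℝ) : ℂ) ^ m * v (alphaString n)
        else 0 := by
  intro x
  have hv_supp : (tensProj k n 0).mulVec v = v := by
    funext y
    by_cases hy : validPath k y <;>
      simp [tensProj, StartsWithTens, Matrix.mulVec_diagonal, hy, hv]
  conv_lhs => rw [← hv_supp]
  rw [Matrix.mulVec_mulVec, prod_phiMat_mul_tensProj_zero hk hn.ge, Matrix.smul_mulVec,
    Pi.smul_apply, tensProj, Matrix.mulVec_diagonal, startsWithTens_iff_eq_alphaString hn]
  by_cases hx : x = alphaString n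
  · subst hx
    by_cases hα : validPath k (alphaString n) <;> simp [hα, hv]
  · simp [hx]
end

section
/- Let d = 2cos(π/k), k ≥ 3, and for each ℓ ∈ {1,...,k-1} let p_ℓ be the rank-one projection M_ℓ/d (path-model block of E_i at height ℓ). Then the operators Φ_i defined blockwise by these projections (scaled by d) satisfy the Temperley-Lieb relation Φ_iΦ_{i+1}Φ_i = Φ_i on the path space H_{n,k}. -/
open scoped Classical

/-!
On the block of a valid string `x` whose bits `i, i+1` differ, `Φ_i` is the rank-one matrix
`Φ_i(x, y) = √(λ_{a(x)} λ_{a(y)}) / λ_z`, where `z` is the common height after `i` steps and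
`a(x) = z ± 1` the height of `x` after `i + 1` steps. In `Φ_i Φ_{i+1} Φ_i` only the diagonal of
`Φ_{i+1}` survives, since an off-diagonal entry of `Φ_{i+1}` flips bit `i + 1` of a string whose
bits `i, i+1` differ and so leaves the support of `Φ_i`. The surviving term sits at the unique
string `y` of the block whose bits `i, i+1, i+2` alternate, where `Φ_{i+1}(y, y) = λ_z / λ_{a(y)}`
cancels the middle factor `λ_{a(y)} / λ_z` of the square of the rank-one block.
-/

namespace PathModel

variable {k n i m : ℕ} {x y z : Fin n → Bool}

def AgreeOff (i : ℕ) (x y : Fin n → Bool) : Prop :=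
  ∀ j : Fin n, (j : ℕ) ≠ i → (j : ℕ) ≠ i + 1 → x j = y j

def Active (i : ℕ) (x : Fin n → Bool) : Prop :=
  bit x i ≠ bit x (i + 1)

lemma AgreeOff.refl (i : ℕ) (x : Fin n → Bool) : AgreeOff i x x := fun _ _ _ => rfl

lemma AgreeOff.trans (hxy : AgreeOff i x y) (hyz : AgreeOff i y z) : AgreeOff i x z :=
  fun j h0 h1 => (hxy j h0 h1).trans (hyz j h0 h1)

lemma AgreeOff.symm (h : AgreeOff i x y) : AgreeOff i y x :=
  fun j h0 h1 => (h j h0 h1).symm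

lemma bit_of_lt (h : m < n) : bit x m = x ⟨m, h⟩ := dif_pos h

lemma AgreeOff.bit_eq (h : AgreeOff i x y) (h0 : m ≠ i) (h1 : m ≠ i + 1) :
    bit x m = bit y m := by
  unfold bit
  split_ifs
  exacts [h _ h0 h1, rfl]

lemma Active.bit_succ (h : Active i x) : bit x (i + 1) = !bit x i :=
  Bool.eq_not_iff.2 (Ne.symm h)

lemma eq_of_agreeOff (hn : i + 1 < n) (h : AgreeOff i x y) (h0 : bit x i = bit y i)
    (h1 : bit x (i + 1) = bit y (i + 1)) : x = y := by
  funext ⟨j, hj⟩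
  by_cases hj0 : j = i
  · subst hj0; simpa [bit_of_lt hj] using h0
  by_cases hj1 : j = i + 1
  · subst hj1; simpa [bit_of_lt hj] using h1
  exact h _ hj0 hj1

lemma eq_of_agreeOff_of_alternating (hn : i + 2 < n) (h : AgreeOff i x y)
    (hx : Active i x) (hx' : Active (i + 1) x) (hy : Active i y) (hy' : Active (i + 1) y) :
    x = y := by
  have h2 : bit x (i + 1 + 1) = bit y (i + 1 + 1) := h.bit_eq (by omega) (by omega)
  have h1 : bit x (i + 1) = bit y (i + 1) := by
    rw [hx'.bit_succ, hy'.bit_succ] at h2; simpa using h2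
  refine eq_of_agreeOff (by omega) h ?_ h1
  rw [hx.bit_succ, hy.bit_succ] at h1; simpa using h1

lemma eq_of_agreeOff_succ_of_alternating (hn : i + 2 < n) (h : AgreeOff (i + 1) x y)
    (hx : Active i x) (hx' : Active (i + 1) x) (hy : Active i y) (hy' : Active (i + 1) y) :
    x = y := by
  have h0 : bit x i = bit y i := h.bit_eq (by omega) (by omega)
  have h1 : bit x (i + 1) = bit y (i + 1) := by rw [hx.bit_succ, hy.bit_succ, h0]
  refine eq_of_agreeOff hn h h1 ?_
  rw [hx'.bit_succ, hy'.bit_succ, h1]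

lemma ht_succ (h : m < n) : ht x (m + 1) = ht x m + if bit x m then 1 else -1 := by
  have split (j : Fin n) :
      (if (j : ℕ) < m + 1 then (if x j then (1 : ℤ) else -1) else 0) =
        (if (j : ℕ) < m then (if x j then 1 else -1) else 0) +
          if j = ⟨m, h⟩ then (if x j then 1 else -1) else 0 := by
    simp only [Fin.ext_iff]
    split_ifs <;> simp_all <;> omega
  rw [ht, ht, Finset.sum_congr rfl fun j _ => split j, Finset.sum_add_distrib,
    Finset.sum_ite_eq', if_pos (Finset.mem_univ _), bit_of_lt h, add_assoc]

lemma ht_congr (h : ∀ j : Fin n, (j : ℕ) < m → x j = y j) : ht x m = ht y m := by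
  unfold ht
  congr 1
  refine Finset.sum_congr rfl fun j _ => ?_
  by_cases hj : (j : ℕ) < m
  · simp only [hj, h j hj]
  · simp only [hj, if_false]

lemma Active.ht_add_two (hn : i + 1 < n) (h : Active i x) : ht x (i + 2) = ht x i := by
  rw [ht_succ hn, ht_succ (by omega), h.bit_succ]
  cases bit x i <;> simp

lemma AgreeOff.ht_eq_of_le (h : AgreeOff i x y) (hm : m ≤ i) : ht x m = ht y m :=
  ht_congr fun j hj => h j (by omega) (by omega)

lemma AgreeOff.ht_eq (hn : i + 1 < n) (h : AgreeOff i x y) (hx : Active i x) (hy : Active i y)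
    (hm : m ≠ i + 1) (hmn : m ≤ n) : ht x m = ht y m := by
  obtain hmi | hmi := le_or_gt m i
  · exact h.ht_eq_of_le hmi
  have h2 : i + 2 ≤ m := by omega
  clear hm hmi
  induction m, h2 using Nat.le_induction with
  | base => rw [hx.ht_add_two hn, hy.ht_add_two hn, h.ht_eq_of_le le_rfl]
  | succ m hm ih =>
    rw [ht_succ (by omega), ht_succ (by omega), ih (by omega), h.bit_eq (by omega) (by omega)]

lemma validPath_of_agreeOff (hn : i + 2 < n) (hxy : AgreeOff i x y) (hx : validPath k x)
    (hxa : Active i x) (hya : Active i y) (hya' : Active (i + 1) y) : validPath k y := by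
  rintro ⟨m, hm⟩
  by_cases hm1 : m = i + 1
  · subst hm1
    rw [← hya'.ht_add_two hn, ← hxy.ht_eq (by omega) hxa hya (by omega) (by omega)]
    exact hx ⟨i + 1 + 2, by omega⟩
  · rw [← hxy.ht_eq (by omega) hxa hya hm1 (by omega)]
    exact hx ⟨m, hm⟩

lemma exists_agreeOff_alternating (hn : i + 2 < n) (hx : validPath k x) (hxa : Active i x) :
    ∃ y, AgreeOff i x y ∧ validPath k y ∧ Active i y ∧ Active (i + 1) y := by
  set b := bit x (i + 1 + 1)
  let y : Fin n → Bool := fun j => if (j : ℕ) = i then b else if (j : ℕ) = i + 1 then !b else x j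
  have hy0 : bit y i = b := by rw [bit_of_lt (by omega)]; simp [y]
  have hy1 : bit y (i + 1) = !b := by rw [bit_of_lt (by omega)]; simp [y]
  have hy2 : bit y (i + 1 + 1) = b := by rw [bit_of_lt (by omega)]; simp [y, b, bit_of_lt hn]
  have hxy : AgreeOff i x y := fun j h0 h1 => by simp [y, h0, h1]
  have hya : Active i y := by simp [Active, hy0, hy1]
  have hya' : Active (i + 1) y := by simp [Active, hy1, hy2]
  exact ⟨y, hxy, validPath_of_agreeOff hn hxy hx hxa hya hya', hya, hya'⟩

lemma lam_pos {m : ℤ} (h1 : 1 ≤ m) (h2 : m ≤ (k : ℤ) - 1) : 0 < lam k m := by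
  have hk : (0 : ℝ) < k := by exact_mod_cast (by omega : (0 : ℤ) < k)
  have hm : (0 : ℝ) < m := by exact_mod_cast h1
  have hmk : (m : ℝ) < k := by exact_mod_cast (by omega : m < (k : ℤ))
  rw [lam, if_pos ⟨h1, h2⟩, mul_div_assoc]
  exact Real.sin_pos_of_pos_of_lt_pi (by positivity)
    (mul_lt_of_lt_one_right Real.pi_pos ((div_lt_one hk).2 hmk))

lemma lam_nonneg (k : ℕ) (m : ℤ) : 0 ≤ lam k m := by
  by_cases h : 1 ≤ m ∧ m ≤ (k : ℤ) - 1
  · exact (lam_pos h.1 h.2).le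
  · rw [lam, if_neg h]

lemma lam_ht_pos (hx : validPath k x) (hm : m ≤ n) : 0 < lam k (ht x m) :=
  lam_pos (hx ⟨m, by omega⟩).1 (hx ⟨m, by omega⟩).2

lemma PhiMat_support (h : PhiMat k n i x y ≠ 0) :
    AgreeOff i x y ∧ validPath k x ∧ validPath k y ∧ Active i x ∧ Active i y := by
  unfold PhiMat at h
  split_ifs at h with hc
  · refine ⟨hc.1, hc.2.1, hc.2.2, ?_⟩
    unfold Active
    revert h
    cases bit x i <;> cases bit x (i + 1) <;> cases bit y i <;> cases bit y (i + 1) <;> simp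
  · exact absurd rfl h

lemma PhiMat_apply_of_active (hn : i + 1 < n) (hxy : AgreeOff i x y) (hx : validPath k x)
    (hy : validPath k y) (hxa : Active i x) (hya : Active i y) :
    PhiMat k n i x y =
      ((√(lam k (ht x (i + 1)) * lam k (ht y (i + 1))) / lam k (ht x i) : ℝ) : ℂ) := by
  rw [PhiMat, if_pos ⟨hxy, hx, hy⟩, hxa.bit_succ, hya.bit_succ, ht_succ (by omega),
    ht_succ (by omega), ← hxy.ht_eq_of_le le_rfl]
  cases bit x i <;> cases bit y i <;>
    simp [Real.sqrt_mul_self (lam_nonneg _ _), mul_comm, sub_eq_add_neg]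

lemma PhiMat_apply_self (hn : i + 1 < n) (hx : validPath k x) (hxa : Active i x) :
    PhiMat k n i x x = ((lam k (ht x (i + 1)) / lam k (ht x i) : ℝ) : ℂ) := by
  rw [PhiMat_apply_of_active hn (AgreeOff.refl i x) hx hx hxa hxa,
    Real.sqrt_mul_self (lam_nonneg _ _)]

lemma sqrt_mul_div_mul_div_mul_sqrt_mul {a b c d : ℝ} (ha : 0 ≤ a) (hb : 0 < b) :
    √(a * b) / d * (d / b) * (√(b * c) / d) = √(a * c) / d := by
  rcases eq_or_ne d 0 with rfl | hd
  · simp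
  rw [Real.sqrt_mul ha, Real.sqrt_mul hb.le, Real.sqrt_mul ha]
  field_simp
  rw [Real.sq_sqrt hb.le]

lemma PhiMat_apply_mul_succ_apply_mul_apply (hn : i + 2 < n) (hxy : AgreeOff i x y)
    (hx : validPath k x) (hy : validPath k y) (hxa : Active i x) (hya : Active i y)
    (hya' : Active (i + 1) y) (z : Fin n → Bool) :
    PhiMat k n i x y * PhiMat k n (i + 1) y y * PhiMat k n i y z = PhiMat k n i x z := by
  by_cases hz : AgreeOff i x z ∧ validPath k z ∧ Active i z
  · obtain ⟨hxz, hz, hza⟩ := hz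
    rw [PhiMat_apply_of_active (by omega) hxy hx hy hxa hya, PhiMat_apply_self hn hy hya',
      PhiMat_apply_of_active (by omega) (hxy.symm.trans hxz) hy hz hya hza,
      PhiMat_apply_of_active (by omega) hxz hx hz hxa hza, hya.ht_add_two (by omega),
      ← hxy.ht_eq_of_le le_rfl, ← Complex.ofReal_mul, ← Complex.ofReal_mul,
      sqrt_mul_div_mul_div_mul_sqrt_mul (lam_nonneg _ _) (lam_ht_pos hy (by omega))]
  · have hyz : PhiMat k n i y z = 0 := by
      by_contra h
      obtain ⟨hyz, -, hz', -, hza⟩ := PhiMat_support h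
      exact hz ⟨hxy.trans hyz, hz', hza⟩
    have hxz : PhiMat k n i x z = 0 := by
      by_contra h
      obtain ⟨hxz, -, hz', -, hza⟩ := PhiMat_support h
      exact hz ⟨hxz, hz', hza⟩
    rw [hyz, hxz, mul_zero]

lemma PhiMat_mul_succ_mul_eq_mul_diagonal_mul (hn : i + 2 < n) :
    PhiMat k n i * PhiMat k n (i + 1) * PhiMat k n i =
      PhiMat k n i * Matrix.diagonal (PhiMat k n (i + 1)).diag * PhiMat k n i := by
  ext x z
  rw [Matrix.mul_apply, Matrix.mul_apply]
  refine Finset.sum_congr rfl fun w _ => ?_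
  by_cases hwa : Active i w
  · rw [Matrix.mul_diagonal, Matrix.mul_apply, Finset.sum_eq_single w, Matrix.diag_apply]
    · intro y _ hyw
      by_contra h
      obtain ⟨-, -, -, -, hya⟩ := PhiMat_support (left_ne_zero_of_mul h)
      obtain ⟨hagree, -, -, hya', hwa'⟩ := PhiMat_support (right_ne_zero_of_mul h)
      exact hyw (eq_of_agreeOff_succ_of_alternating hn hagree hya hya' hwa hwa')
    · simp
  · have hwz : PhiMat k n i w z = 0 := by
      by_contra h
      exact hwa (PhiMat_support h).2.2.2.1
    rw [hwz, mul_zero, mul_zero]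

lemma PhiMat_mul_diagonal_succ_mul_eq_self (hn : i + 2 < n) :
    PhiMat k n i * Matrix.diagonal (PhiMat k n (i + 1)).diag * PhiMat k n i = PhiMat k n i := by
  ext x z
  simp only [Matrix.mul_apply (M := _ * _), Matrix.mul_diagonal, Matrix.diag_apply]
  by_cases hx : validPath k x ∧ Active i x
  · obtain ⟨y, hxy, hy, hya, hya'⟩ := exists_agreeOff_alternating hn hx.1 hx.2
    rw [Finset.sum_eq_single y,
      PhiMat_apply_mul_succ_apply_mul_apply hn hxy hx.1 hy hx.2 hya hya']
    · intro w _ hwy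
      by_contra h
      obtain ⟨hxw, -, -, -, hwa⟩ := PhiMat_support (left_ne_zero_of_mul (left_ne_zero_of_mul h))
      obtain ⟨-, -, -, hwa', -⟩ := PhiMat_support (right_ne_zero_of_mul (left_ne_zero_of_mul h))
      exact hwy (eq_of_agreeOff_of_alternating hn (hxw.symm.trans hxy) hwa hwa' hya hya')
    · simp
  · have hxw (w : Fin n → Bool) : PhiMat k n i x w = 0 := by
      by_contra h
      obtain ⟨-, hxv, -, hxa, -⟩ := PhiMat_support h
      exact hx ⟨hxv, hxa⟩
    simp [hxw]

theorem PhiMat_mul_succ_mul_eq_self (hn : i + 2 < n) :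
    PhiMat k n i * PhiMat k n (i + 1) * PhiMat k n i = PhiMat k n i := by
  rw [PhiMat_mul_succ_mul_eq_mul_diagonal_mul hn, PhiMat_mul_diagonal_succ_mul_eq_self hn]

end PathModel

theorem PhiMat_TL_relation_general (n k : ℕ) (i : ℕ) (hi : i + 2 < n)
    (v : (Fin n → Bool) → ℂ) :
    (PhiMat k n i * PhiMat k n (i + 1) * PhiMat k n i).mulVec v =
      (PhiMat k n i).mulVec v := by
  rw [PathModel.PhiMat_mul_succ_mul_eq_self hi]

/-- for `d = 2cos(π/k)`, `k ≥ 3`, the path-model operators `Φ_i`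
(built blockwise from the rank-one projections `M_ℓ/d` scaled by `d`) satisfy the
Temperley-Lieb relation `Φ_i Φ_{i+1} Φ_i = Φ_i` on the path space `H_{n,k}`, i.e.
on vectors supported on valid path strings. -/
theorem PhiMat_TL_relation (n k : ℕ) (hk : 3 ≤ k) (i : ℕ) (hi : i + 2 < n)
    (v : (Fin n → Bool) → ℂ) (hv : ∀ x, ¬ validPath k x → v x = 0) :
    (PhiMat k n i * PhiMat k n (i + 1) * PhiMat k n i).mulVec v =
      (PhiMat k n i).mulVec v :=
  PhiMat_TL_relation_general n k i hi v
end
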